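/- arXiv:1601.02269 — 2 statements merged into one kernel-verified Lean document; each statement's English description precedes it below -/
import Mathlib

section
/- Let (W,S,*) be a twisted Coxeter system and let x, y ∈ I_* be twisted involutions. Then the set of involution words of y relative to x equals the union of the sets of reduced words of the atoms of y relative to x; that is, R̂_*(x,y) = ⋃_{w ∈ A_*(x,y)} R(w). Consequently each set R̂_*(x,y) is preserved by the braid relations of (W,S). -/
open CoxeterSystem
open scoped Classical

variable {B W : Type*} [Group W] {M : CoxeterMatrix B}

/-- One step of the twisted conjugation action of the `0`-Hecke monoid on
twisted involutions: `x ⋉ s = (s*)⁻¹ ∘ x ∘ s` where `∘` is the Demazure product. -/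
noncomputable def invStep (cs : CoxeterSystem M W) (σ : W → W) (x : W) (i : B) : W :=
  if cs.length (x * cs.simple i) < cs.length x then x
  else if σ (cs.simple i) * x = x * cs.simple i then x * cs.simple i
  else σ (cs.simple i) * x * cs.simple i

/-- Iterated action `((x ⋉ s₁) ⋉ s₂) ⋉ ⋯ ⋉ sₖ` of a word on a twisted involution. -/
noncomputable def invWord (cs : CoxeterSystem M W) (σ : W → W) (x : W) (l : List B) : W :=
  l.foldl (invStep cs σ) x

/-- The involution words `R̂_*(x, y)` of `y` relative to `x`. -/
noncomputable def InvWords (cs : CoxeterSystem M W) (σ : W → W) (x y : W) : Set (List B) :=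
  {l | invWord cs σ x l = y ∧ ∀ l' : List B, invWord cs σ x l' = y → l.length ≤ l'.length}

/-- The set `R(w)` of reduced words of `w`. -/
def ReducedWords (cs : CoxeterSystem M W) (w : W) : Set (List B) :=
  {l | cs.wordProd l = w ∧ cs.IsReduced l}

/-- The Hecke atoms `B_*(x, y) = {w : x ⋉ w = y}`:  `x ⋉ w` is computed by applying any
reduced word of `w` letter by letter. -/
noncomputable def HeckeAtoms (cs : CoxeterSystem M W) (σ : W → W) (x y : W) : Set W :=
  {w | ∃ l : List B, cs.wordProd l = w ∧ cs.IsReduced l ∧ invWord cs σ x l = y}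

/-- The atoms `A_*(x, y)`: minimal-length elements of `B_*(x, y)`. -/
noncomputable def Atoms (cs : CoxeterSystem M W) (σ : W → W) (x y : W) : Set W :=
  {w ∈ HeckeAtoms cs σ x y | ∀ v ∈ HeckeAtoms cs σ x y, cs.length w ≤ cs.length v}

/-- The twisted involution length `ℓ̂_*(x)`: the common length of words in `R̂_*(1, x)`. -/
noncomputable def hatLength (cs : CoxeterSystem M W) (σ : W → W) (x : W) : ℕ :=
  sInf {k | ∃ l : List B, l.length = k ∧ invWord cs σ 1 l = x}

/-- The Bruhat order on `W`. -/
def BruhatLE (cs : CoxeterSystem M W) : W → W → Prop :=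
  Relation.ReflTransGen
    (fun a b => (∃ t, cs.IsReflection t ∧ b = a * t) ∧ cs.length a < cs.length b)

/-!
For a twisted involution `x` and a simple reflection `s`, `x ⋉ s = s* ∘ x ∘ s`; this uses that
when `s* x > x < x s`, the element `s* x s` is either `x` or of length `ℓ(x) + 2` (a consequence
of the exchange condition). As the left and right actions of the `0`-Hecke monoid commute,
`x ⋉ (s₁ ⋯ sₖ) = s*ₖ ∘ ⋯ ∘ s*₁ ∘ x ∘ s₁ ∘ ⋯ ∘ sₖ`. This depends on the word only through its
Demazure product `δ = s₁ ∘ ⋯ ∘ sₖ`, because `x ∘ s₁ ∘ ⋯ ∘ sₖ` is the Bruhat-largest element of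
`x · [1, δ]` by the lifting property of the Bruhat order (which rests on the strong exchange
condition, obtained from the reflection representation on `T × {±1}`). Since `ℓ(δ) ≤ k`, with
equality exactly for reduced words, the shortest words `l` with `x ⋉ l = y` are the reduced
words of the shortest `w` with `x ⋉ w = y`.
-/

namespace CoxeterSystem

variable (cs : CoxeterSystem M W)

lemma prod_map_alternatingWord_two_mul {G : Type*} [Monoid G] (f : B → G) (i j : B) (m : ℕ) :
    ((alternatingWord i j (2 * m)).map f).prod = (f i * f j) ^ m := by
  induction m with
  | zero => simp [alternatingWord]
  | succ m ih =>
    rw [show 2 * (m + 1) = 2 * m + 1 + 1 by ring, alternatingWord_succ', alternatingWord_succ']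
    simp [ih, pow_succ', mul_assoc]

lemma even_count_leftInvSeq_alternatingWord (i j : B) (t : W) :
    Even ((cs.leftInvSeq (alternatingWord i j (2 * M i j))).count t) := by
  set g : ℕ → W := fun k => cs.simple i * (cs.simple j * cs.simple i) ^ k
  have hlis : cs.leftInvSeq (alternatingWord i j (2 * M i j)) = (List.range (2 * M i j)).map g := by
    refine List.ext_getElem (by simp) fun k hk _ => ?_
    rw [getElem_leftInvSeq_alternatingWord cs i j _ k (by simpa using hk),
      prod_alternatingWord_eq_mul_pow]
    simp [g, Nat.mul_add_div]
  -- `g` has period `M i j`, so the list is a list written twice.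
  have hperiod : (List.range (M i j)).map (g ∘ (M i j + ·)) = (List.range (M i j)).map g := by
    refine List.map_congr_left fun k _ => ?_
    simp [g, pow_add]
  rw [hlis, two_mul, List.range_add, List.map_append, List.map_map, hperiod, List.count_append]
  exact ⟨_, rfl⟩

noncomputable def reflSignPerm (i : B) : Equiv.Perm (W × ℤˣ) :=
  Function.Involutive.toPerm
    (fun p => (cs.simple i * p.1 * cs.simple i, if p.1 = cs.simple i then -p.2 else p.2))
    (by
      rintro ⟨t, e⟩
      by_cases ht : t = cs.simple i
      · simp [ht]
      · simp [ht, mul_assoc, mul_eq_one_iff_eq_inv])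

lemma reflSignPerm_apply (i : B) (t : W) (e : ℤˣ) :
    cs.reflSignPerm i (t, e) =
      (cs.simple i * t * cs.simple i, if t = cs.simple i then -e else e) := rfl

lemma prod_map_reflSignPerm (ω : List B) (t : W) (e : ℤˣ) :
    (ω.map cs.reflSignPerm).prod (t, e) =
      (cs.wordProd ω * t * (cs.wordProd ω)⁻¹,
        (-1) ^ (cs.leftInvSeq ω).count (cs.wordProd ω * t * (cs.wordProd ω)⁻¹) * e) := by
  induction ω with
  | nil => simp
  | cons i ω ih =>
    set t' := cs.wordProd ω * t * (cs.wordProd ω)⁻¹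
    have hconj : cs.wordProd (i :: ω) * t * (cs.wordProd (i :: ω))⁻¹ =
        MulAut.conj (cs.simple i) t' := by
      simp [t', wordProd_cons, mul_assoc]
    have hlis : cs.leftInvSeq (i :: ω) =
        cs.simple i :: (cs.leftInvSeq ω).map (MulAut.conj (cs.simple i)) := rfl
    rw [List.map_cons, List.prod_cons, Equiv.Perm.mul_apply, ih, reflSignPerm_apply, hconj, hlis,
      List.count_cons, List.count_map_of_injective _ _ (MulAut.conj _).injective]
    have hs : (MulAut.conj (cs.simple i) t' = cs.simple i) ↔ t' = cs.simple i := by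
      rw [← (MulAut.conj (cs.simple i)).injective.eq_iff]
      simp [mul_assoc]
    simp only [beq_iff_eq, eq_comm (a := cs.simple i), hs]
    split_ifs <;> simp [pow_succ]

lemma isLiftable_reflSignPerm : M.IsLiftable cs.reflSignPerm := by
  intro i j
  rw [← prod_map_alternatingWord_two_mul]
  ext ⟨t, e⟩ : 1
  have hπ : cs.wordProd (alternatingWord i j (2 * M i j)) = 1 := by
    simp [prod_alternatingWord_eq_mul_pow]
  rw [prod_map_reflSignPerm, hπ, (cs.even_count_leftInvSeq_alternatingWord i j _).neg_one_pow]
  simp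

/-- The reflection representation of `W` on `T × {±1}`, here extended to all of `W × {±1}`. -/
noncomputable def reflSignRep : W →* Equiv.Perm (W × ℤˣ) :=
  cs.lift ⟨cs.reflSignPerm, cs.isLiftable_reflSignPerm⟩

lemma reflSignRep_simple (i : B) : cs.reflSignRep (cs.simple i) = cs.reflSignPerm i :=
  cs.lift_apply_simple cs.isLiftable_reflSignPerm i

lemma reflSignRep_wordProd_apply (ω : List B) (t : W) (e : ℤˣ) :
    cs.reflSignRep (cs.wordProd ω) (t, e) =
      (cs.wordProd ω * t * (cs.wordProd ω)⁻¹,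
        (-1) ^ (cs.leftInvSeq ω).count (cs.wordProd ω * t * (cs.wordProd ω)⁻¹) * e) := by
  rw [← prod_map_reflSignPerm, wordProd, map_list_prod, List.map_map]
  congr 3
  exact funext cs.reflSignRep_simple

lemma reflSignRep_self_apply {t : W} (ht : cs.IsReflection t) :
    cs.reflSignRep t (t, 1) = (t, -1) := by
  obtain ⟨u, i, rfl⟩ := ht
  obtain ⟨ω, rfl⟩ := cs.wordProd_surjective u
  set c : ℤˣ :=
    (-1) ^ (cs.leftInvSeq ω).count (cs.wordProd ω * cs.simple i * (cs.wordProd ω)⁻¹)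
  have hu (e : ℤˣ) : cs.reflSignRep (cs.wordProd ω) (cs.simple i, e) =
      (cs.wordProd ω * cs.simple i * (cs.wordProd ω)⁻¹, c * e) :=
    cs.reflSignRep_wordProd_apply ω _ e
  have hinv : cs.reflSignRep (cs.wordProd ω)⁻¹
      (cs.wordProd ω * cs.simple i * (cs.wordProd ω)⁻¹, 1) = (cs.simple i, c) := by
    rw [map_inv, Equiv.Perm.inv_eq_iff_eq, hu, Int.units_mul_self]
  rw [map_mul, map_mul, Equiv.Perm.mul_apply, Equiv.Perm.mul_apply, hinv, reflSignRep_simple,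
    reflSignPerm_apply, if_pos rfl, simple_mul_simple_self, one_mul, hu, mul_neg,
    Int.units_mul_self]

/-- The strong exchange condition. -/
theorem IsLeftInversion.mem_leftInvSeq {cs : CoxeterSystem M W} {ω : List B} {t : W}
    (h : cs.IsLeftInversion (cs.wordProd ω) t) : t ∈ cs.leftInvSeq ω := by
  -- Compute the sign attached to `t` by `t * π ω` in two ways: through a reduced word of
  -- `t * π ω`, and through the product of `π ω` (where `t` does not occur) and `t`.
  by_contra hnot
  obtain ⟨ω', hω', htw⟩ := cs.exists_isReduced (t * cs.wordProd ω)
  have hrep : cs.reflSignRep (t * cs.wordProd ω) ((cs.wordProd ω)⁻¹ * t * cs.wordProd ω, 1) =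
      (t, -1) := by
    rw [map_mul, Equiv.Perm.mul_apply, cs.reflSignRep_wordProd_apply,
      show ∀ u : W, u * (u⁻¹ * t * u) * u⁻¹ = t from fun u => by group,
      List.count_eq_zero_of_not_mem hnot, pow_zero, one_mul]
    exact cs.reflSignRep_self_apply h.1
  rw [htw, cs.reflSignRep_wordProd_apply, ← htw, show ∀ u : W, t * u * (u⁻¹ * t * u) * (t * u)⁻¹ = t
    from fun u => by group] at hrep
  have hmem : t ∈ cs.leftInvSeq ω' := by
    by_contra hnot'
    rw [List.count_eq_zero_of_not_mem hnot'] at hrep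
    simp at hrep
  have := (cs.isLeftInversion_of_mem_leftInvSeq hω' hmem).2
  rw [← htw, ← mul_assoc, h.1.mul_self, one_mul] at this
  exact h.2.not_gt this

theorem eq_of_isLeftInversion_mul_simple {u t : W} (i : B)
    (h : cs.IsLeftInversion (u * cs.simple i) t) (hu : ¬cs.IsLeftInversion u t) :
    t = u * cs.simple i * u⁻¹ := by
  obtain ⟨ω, hω, rfl⟩ := cs.exists_isReduced u
  have hmem : t ∈ cs.leftInvSeq (ω.concat i) :=
    IsLeftInversion.mem_leftInvSeq (by rwa [wordProd_concat])
  rw [leftInvSeq_concat, List.concat_eq_append, List.mem_append, List.mem_singleton] at hmem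
  exact hmem.resolve_left fun hmem => hu (cs.isLeftInversion_of_mem_leftInvSeq hω hmem)

theorem simple_mul_mul_simple_eq_self {u : W} {a b : B} (ha : ¬cs.IsLeftDescent u a)
    (hb : ¬cs.IsRightDescent u b)
    (h : cs.length (cs.simple a * u * cs.simple b) ≤ cs.length u) :
    cs.simple a * u * cs.simple b = u := by
  rw [not_isRightDescent_iff] at hb
  have hinv : cs.IsLeftInversion (u * cs.simple b) (cs.simple a) :=
    ⟨cs.isReflection_simple a, by rw [← mul_assoc]; omega⟩
  rw [cs.eq_of_isLeftInversion_mul_simple b hinv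
    (by rwa [isLeftInversion_simple_iff_isLeftDescent])]
  simp [mul_assoc]

theorem eq_mul_mul_simple_of_length_add_one {v t : W} (ht : cs.IsReflection t) {i : B}
    (hlen : cs.length v + 1 = cs.length (v * t)) (hv : ¬cs.IsRightDescent v i)
    (hvt : cs.IsRightDescent (v * t) i) : v = v * t * cs.simple i := by
  rw [not_isRightDescent_iff] at hv
  rw [isRightDescent_iff] at hvt
  have htt (x : W) : t * (t * x) = x := by rw [← mul_assoc, ht.mul_self, one_mul]
  have hinv : cs.IsLeftInversion (v * t * cs.simple i * cs.simple i) (v * t * v⁻¹) :=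
    ⟨ht.conj v, by simp [mul_assoc, ht.mul_self]; omega⟩
  have hnot : ¬cs.IsLeftInversion (v * t * cs.simple i) (v * t * v⁻¹) := fun h => by
    have := h.2
    rw [show v * t * v⁻¹ * (v * t * cs.simple i) = v * cs.simple i by
      simp [mul_assoc, htt]] at this
    omega
  have := cs.eq_of_isLeftInversion_mul_simple i hinv hnot
  calc v = v * t * v⁻¹ * (v * t) := by simp [mul_assoc, ht.mul_self]
    _ = v * t * cs.simple i := by rw [this]; simp [mul_assoc]

variable {cs}

lemma _root_.BruhatLE.refl (w : W) : BruhatLE cs w w := Relation.ReflTransGen.refl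

lemma _root_.BruhatLE.trans {u v w : W} (h : BruhatLE cs u v) (h' : BruhatLE cs v w) :
    BruhatLE cs u w :=
  Relation.ReflTransGen.trans h h'

lemma _root_.BruhatLE.length_le {u w : W} (h : BruhatLE cs u w) : cs.length u ≤ cs.length w := by
  induction h with
  | refl => rfl
  | tail _ hstep ih => exact ih.trans hstep.2.le

lemma _root_.BruhatLE.antisymm {u w : W} (h : BruhatLE cs u w) (h' : BruhatLE cs w u) : u = w := by
  rcases Relation.ReflTransGen.cases_tail h with rfl | ⟨v, huv, hstep⟩
  · rfl
  · exact absurd ((BruhatLE.length_le huv).trans_lt hstep.2) h'.length_le.not_gt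

lemma bruhatLE_mul {v t : W} (ht : cs.IsReflection t) (h : cs.length v < cs.length (v * t)) :
    BruhatLE cs v (v * t) :=
  .single ⟨⟨t, ht, rfl⟩, h⟩

lemma mul_simple_bruhatLE {z : W} {i : B} (h : cs.IsRightDescent z i) :
    BruhatLE cs (z * cs.simple i) z := by
  simpa using bruhatLE_mul (v := z * cs.simple i) (cs.isReflection_simple i)
    (by rwa [simple_mul_simple_cancel_right])

lemma bruhatLE_mul_simple_mul {v t : W} (ht : cs.IsReflection t) {i : B}
    (h : cs.length (v * cs.simple i) < cs.length (v * t * cs.simple i)) :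
    BruhatLE cs (v * cs.simple i) (v * t * cs.simple i) := by
  have hconj := ht.conj (cs.simple i)
  rw [inv_simple] at hconj
  have hvt : v * t * cs.simple i = v * cs.simple i * (cs.simple i * t * cs.simple i) := by
    simp [mul_assoc]
  rw [hvt] at h ⊢
  exact bruhatLE_mul hconj h

/-- Either `v ⋖ v t` is a covering and then `v t = v s`, or the parity of lengths leaves room
for the chain `v < v s < v t s < v t`. -/
lemma bruhatLE_cross_of_isRightDescent {v t : W} (ht : cs.IsReflection t)
    (hlt : cs.length v < cs.length (v * t)) {i : B} (hv : ¬cs.IsRightDescent v i)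
    (hvt : cs.IsRightDescent (v * t) i) :
    BruhatLE cs v (v * t * cs.simple i) ∧ BruhatLE cs (v * cs.simple i) (v * t) := by
  by_cases hcov : cs.length v + 1 = cs.length (v * t)
  · have h := cs.eq_mul_mul_simple_of_length_add_one ht hcov hv hvt
    refine ⟨h ▸ .refl v, ?_⟩
    nth_rw 1 [h, simple_mul_simple_cancel_right]
    exact .refl _
  have htop := mul_simple_bruhatLE hvt
  have hparity := cs.length_mul_mod_two v t
  obtain ⟨k, hk⟩ := ht.odd_length
  rw [not_isRightDescent_iff] at hv
  rw [isRightDescent_iff] at hvt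
  have hmid : BruhatLE cs (v * cs.simple i) (v * t * cs.simple i) :=
    bruhatLE_mul_simple_mul ht (by omega)
  have hup : BruhatLE cs v (v * cs.simple i) := bruhatLE_mul (cs.isReflection_simple i) (by omega)
  exact ⟨hup.trans hmid, hmid.trans htop⟩

variable (cs) in
/-- `z ∘ s i` for the Demazure product `∘`. -/
noncomputable def demazureStep (z : W) (i : B) : W :=
  if cs.IsRightDescent z i then z else z * cs.simple i

variable (cs) in
noncomputable def lowerStep (z : W) (i : B) : W :=
  if cs.IsRightDescent z i then z * cs.simple i else z

lemma demazureStep_of_isRightDescent {z : W} {i : B} (h : cs.IsRightDescent z i) :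
    cs.demazureStep z i = z := if_pos h

lemma demazureStep_of_not_isRightDescent {z : W} {i : B} (h : ¬cs.IsRightDescent z i) :
    cs.demazureStep z i = z * cs.simple i := if_neg h

lemma lowerStep_of_isRightDescent {z : W} {i : B} (h : cs.IsRightDescent z i) :
    cs.lowerStep z i = z * cs.simple i := if_pos h

lemma lowerStep_of_not_isRightDescent {z : W} {i : B} (h : ¬cs.IsRightDescent z i) :
    cs.lowerStep z i = z := if_neg h

lemma bruhatLE_demazureStep (z : W) (i : B) : BruhatLE cs z (cs.demazureStep z i) := by
  by_cases h : cs.IsRightDescent z i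
  · rw [demazureStep_of_isRightDescent h]
    exact .refl z
  · rw [demazureStep_of_not_isRightDescent h]
    exact bruhatLE_mul (cs.isReflection_simple i) (by rw [not_isRightDescent_iff] at h; omega)

lemma mul_simple_bruhatLE_demazureStep (z : W) (i : B) :
    BruhatLE cs (z * cs.simple i) (cs.demazureStep z i) := by
  by_cases h : cs.IsRightDescent z i
  · rw [demazureStep_of_isRightDescent h]
    exact mul_simple_bruhatLE h
  · rw [demazureStep_of_not_isRightDescent h]
    exact .refl _

lemma lowerStep_bruhatLE (z : W) (i : B) : BruhatLE cs (cs.lowerStep z i) z := by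
  by_cases h : cs.IsRightDescent z i
  · rw [lowerStep_of_isRightDescent h]
    exact mul_simple_bruhatLE h
  · rw [lowerStep_of_not_isRightDescent h]
    exact .refl z

lemma lowerStep_demazureStep_bruhatLE (z : W) (i : B) :
    BruhatLE cs (cs.lowerStep (cs.demazureStep z i) i) z := by
  by_cases h : cs.IsRightDescent z i
  · rw [demazureStep_of_isRightDescent h]
    exact lowerStep_bruhatLE z i
  · rw [demazureStep_of_not_isRightDescent h, lowerStep_of_isRightDescent
      (by rwa [isRightDescent_iff_not_isRightDescent_mul, simple_mul_simple_cancel_right]),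
      simple_mul_simple_cancel_right]
    exact .refl z

lemma demazureStep_bruhatLE_demazureStep_mul {v t : W} (ht : cs.IsReflection t)
    (hlt : cs.length v < cs.length (v * t)) (i : B) :
    BruhatLE cs (cs.demazureStep v i) (cs.demazureStep (v * t) i) := by
  by_cases hv : cs.IsRightDescent v i
  · rw [demazureStep_of_isRightDescent hv]
    exact (bruhatLE_mul ht hlt).trans (bruhatLE_demazureStep _ i)
  by_cases hvt : cs.IsRightDescent (v * t) i
  · rw [demazureStep_of_not_isRightDescent hv, demazureStep_of_isRightDescent hvt]
    exact (bruhatLE_cross_of_isRightDescent ht hlt hv hvt).2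
  · rw [demazureStep_of_not_isRightDescent hv, demazureStep_of_not_isRightDescent hvt]
    rw [not_isRightDescent_iff] at hv hvt
    exact bruhatLE_mul_simple_mul ht (by omega)

lemma lowerStep_bruhatLE_lowerStep_mul {v t : W} (ht : cs.IsReflection t)
    (hlt : cs.length v < cs.length (v * t)) (i : B) :
    BruhatLE cs (cs.lowerStep v i) (cs.lowerStep (v * t) i) := by
  by_cases hvt : cs.IsRightDescent (v * t) i
  swap
  · rw [lowerStep_of_not_isRightDescent hvt]
    exact (lowerStep_bruhatLE v i).trans (bruhatLE_mul ht hlt)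
  by_cases hv : cs.IsRightDescent v i
  · rw [lowerStep_of_isRightDescent hv, lowerStep_of_isRightDescent hvt]
    rw [isRightDescent_iff] at hv hvt
    exact bruhatLE_mul_simple_mul ht (by omega)
  · rw [lowerStep_of_not_isRightDescent hv, lowerStep_of_isRightDescent hvt]
    exact (bruhatLE_cross_of_isRightDescent ht hlt hv hvt).1

theorem _root_.BruhatLE.demazureStep {u w : W} (h : BruhatLE cs u w) (i : B) :
    BruhatLE cs (cs.demazureStep u i) (cs.demazureStep w i) := by
  induction h with
  | refl => exact .refl _
  | tail _ hstep ih =>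
    obtain ⟨⟨t, ht, rfl⟩, hlt⟩ := hstep
    exact ih.trans (demazureStep_bruhatLE_demazureStep_mul ht hlt i)

theorem _root_.BruhatLE.lowerStep {u w : W} (h : BruhatLE cs u w) (i : B) :
    BruhatLE cs (cs.lowerStep u i) (cs.lowerStep w i) := by
  induction h with
  | refl => exact .refl _
  | tail _ hstep ih =>
    obtain ⟨⟨t, ht, rfl⟩, hlt⟩ := hstep
    exact ih.trans (lowerStep_bruhatLE_lowerStep_mul ht hlt i)

variable (cs) in
noncomputable def demazureWord (x : W) (l : List B) : W :=
  l.foldl cs.demazureStep x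

@[simp] lemma demazureWord_nil (x : W) : cs.demazureWord x [] = x := rfl

lemma demazureWord_concat (x : W) (l : List B) (i : B) :
    cs.demazureWord x (l ++ [i]) = cs.demazureStep (cs.demazureWord x l) i :=
  List.foldl_append ..

lemma exists_mul_eq_demazureWord (x : W) (l : List B) :
    ∃ u, BruhatLE cs u (cs.demazureWord 1 l) ∧ x * u = cs.demazureWord x l := by
  induction l using List.reverseRecOn with
  | nil => exact ⟨1, .refl 1, mul_one x⟩
  | append_singleton l i ih =>
    obtain ⟨u, hu, hxu⟩ := ih
    rw [demazureWord_concat, demazureWord_concat, ← hxu]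
    by_cases h : cs.IsRightDescent (x * u) i
    · exact ⟨u, hu.trans (bruhatLE_demazureStep _ i), (demazureStep_of_isRightDescent h).symm⟩
    · refine ⟨u * cs.simple i, ?_, by rw [demazureStep_of_not_isRightDescent h, mul_assoc]⟩
      exact (mul_simple_bruhatLE_demazureStep u i).trans (hu.demazureStep i)

theorem mul_bruhatLE_demazureWord (x : W) (l : List B) {u : W}
    (hu : BruhatLE cs u (cs.demazureWord 1 l)) : BruhatLE cs (x * u) (cs.demazureWord x l) := by
  induction l using List.reverseRecOn generalizing u with
  | nil =>
    have hu1 : u = 1 := cs.length_eq_zero_iff.mp (by simpa using hu.length_le)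
    rw [hu1, mul_one]
    exact .refl x
  | append_singleton l i ih =>
    rw [demazureWord_concat] at hu ⊢
    have hlow := ih ((hu.lowerStep i).trans (lowerStep_demazureStep_bruhatLE _ i))
    by_cases h : cs.IsRightDescent u i
    · rw [lowerStep_of_isRightDescent h, ← mul_assoc] at hlow
      simpa [mul_assoc] using
        (mul_simple_bruhatLE_demazureStep _ i).trans (hlow.demazureStep i)
    · rw [lowerStep_of_not_isRightDescent h] at hlow
      exact hlow.trans (bruhatLE_demazureStep _ i)

theorem demazureWord_congr {l m : List B} (h : cs.demazureWord 1 l = cs.demazureWord 1 m)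
    (x : W) : cs.demazureWord x l = cs.demazureWord x m := by
  obtain ⟨u, hu, hxu⟩ := exists_mul_eq_demazureWord x l
  obtain ⟨v, hv, hxv⟩ := exists_mul_eq_demazureWord x m
  rw [← hxu, ← hxv]
  exact (hxv ▸ mul_bruhatLE_demazureWord x m (h ▸ hu)).antisymm
    (hxu ▸ mul_bruhatLE_demazureWord x l (h ▸ hv))

lemma length_demazureWord_one_le (l : List B) : cs.length (cs.demazureWord 1 l) ≤ l.length := by
  induction l using List.reverseRecOn with
  | nil => simp
  | append_singleton l i ih =>
    rw [demazureWord_concat, List.length_append, List.length_singleton]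
    by_cases h : cs.IsRightDescent (cs.demazureWord 1 l) i
    · rw [demazureStep_of_isRightDescent h]; omega
    · rw [demazureStep_of_not_isRightDescent h]
      rw [not_isRightDescent_iff] at h
      omega

lemma demazureWord_one_of_isReduced {l : List B} (hl : cs.IsReduced l) :
    cs.demazureWord 1 l = cs.wordProd l := by
  induction l using List.reverseRecOn with
  | nil => simp
  | append_singleton l i ih =>
    have hl' : cs.IsReduced l := by simpa using hl.take l.length
    have hasc : ¬cs.IsRightDescent (cs.wordProd l) i := by
      rw [not_isRightDescent_iff, ← wordProd_singleton, ← wordProd_append, hl, hl']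
      simp
    rw [demazureWord_concat, ih hl', demazureStep_of_not_isRightDescent hasc, wordProd_append,
      wordProd_singleton]

lemma isReduced_of_length_demazureWord_one {l : List B}
    (h : cs.length (cs.demazureWord 1 l) = l.length) : cs.IsReduced l := by
  suffices cs.demazureWord 1 l = cs.wordProd l by rwa [IsReduced, ← this]
  induction l using List.reverseRecOn with
  | nil => simp
  | append_singleton l i ih =>
    have hle := length_demazureWord_one_le (cs := cs) l
    rw [demazureWord_concat, List.length_append, List.length_singleton] at h
    rw [demazureWord_concat]
    by_cases hd : cs.IsRightDescent (cs.demazureWord 1 l) i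
    · rw [demazureStep_of_isRightDescent hd] at h; omega
    · rw [demazureStep_of_not_isRightDescent hd] at h ⊢
      rw [not_isRightDescent_iff] at hd
      rw [ih (by omega), wordProd_append, wordProd_singleton]

variable (cs) in
noncomputable def leftDemazureStep (z : W) (j : B) : W :=
  if cs.IsLeftDescent z j then z else cs.simple j * z

variable (cs) in
noncomputable def leftDemazureWord (z : W) (m : List B) : W :=
  m.foldl cs.leftDemazureStep z

lemma leftDemazureStep_of_isLeftDescent {z : W} {j : B} (h : cs.IsLeftDescent z j) :
    cs.leftDemazureStep z j = z := if_pos h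

lemma leftDemazureStep_of_not_isLeftDescent {z : W} {j : B} (h : ¬cs.IsLeftDescent z j) :
    cs.leftDemazureStep z j = cs.simple j * z := if_neg h

lemma leftDemazureWord_concat (z : W) (m : List B) (j : B) :
    cs.leftDemazureWord z (m ++ [j]) = cs.leftDemazureStep (cs.leftDemazureWord z m) j :=
  List.foldl_append ..

lemma inv_leftDemazureStep (z : W) (j : B) :
    (cs.leftDemazureStep z j)⁻¹ = cs.demazureStep z⁻¹ j := by
  by_cases h : cs.IsLeftDescent z j
  · rw [leftDemazureStep_of_isLeftDescent h,
      demazureStep_of_isRightDescent (cs.isRightDescent_inv_iff.mpr h)]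
  · rw [leftDemazureStep_of_not_isLeftDescent h,
      demazureStep_of_not_isRightDescent (mt cs.isRightDescent_inv_iff.mp h), mul_inv_rev,
      inv_simple]

lemma leftDemazureWord_eq_inv (z : W) (m : List B) :
    cs.leftDemazureWord z m = (cs.demazureWord z⁻¹ m)⁻¹ := by
  induction m generalizing z with
  | nil => simp [leftDemazureWord]
  | cons j m ih =>
    simp only [leftDemazureWord, demazureWord, List.foldl_cons] at ih ⊢
    rw [ih, ← inv_leftDemazureStep]

theorem demazureStep_leftDemazureStep (z : W) (i j : B) :
    cs.demazureStep (cs.leftDemazureStep z j) i = cs.leftDemazureStep (cs.demazureStep z i) j := by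
  by_cases hr : cs.IsRightDescent z i <;> by_cases hl : cs.IsLeftDescent z j
  · rw [leftDemazureStep_of_isLeftDescent hl, demazureStep_of_isRightDescent hr,
      leftDemazureStep_of_isLeftDescent hl]
  · rw [leftDemazureStep_of_not_isLeftDescent hl, demazureStep_of_isRightDescent hr,
      leftDemazureStep_of_not_isLeftDescent hl, demazureStep_of_isRightDescent]
    rw [isRightDescent_iff] at hr
    rw [not_isLeftDescent_iff] at hl
    have := cs.length_simple_mul (z * cs.simple i) j
    rw [IsRightDescent, mul_assoc]
    omega
  · rw [leftDemazureStep_of_isLeftDescent hl, demazureStep_of_not_isRightDescent hr,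
      leftDemazureStep_of_isLeftDescent]
    rw [not_isRightDescent_iff] at hr
    rw [isLeftDescent_iff] at hl
    have := cs.length_mul_simple (cs.simple j * z) i
    rw [IsLeftDescent, ← mul_assoc]
    omega
  rw [leftDemazureStep_of_not_isLeftDescent hl, demazureStep_of_not_isRightDescent hr]
  -- `s j * z * s i` is either `z` or longer than both `s j * z` and `z * s i`.
  by_cases hd : cs.IsRightDescent (cs.simple j * z) i
  · have hkey := cs.simple_mul_mul_simple_eq_self hl hr (by
      rw [isRightDescent_iff] at hd
      rw [not_isLeftDescent_iff] at hl
      omega)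
    rw [demazureStep_of_isRightDescent hd, leftDemazureStep_of_isLeftDescent
      (by rw [IsLeftDescent, ← mul_assoc, hkey, cs.not_isRightDescent_iff.mp hr]; omega)]
    calc cs.simple j * z = cs.simple j * z * cs.simple i * cs.simple i := by simp
      _ = z * cs.simple i := by rw [hkey]
  · rw [demazureStep_of_not_isRightDescent hd, leftDemazureStep_of_not_isLeftDescent, mul_assoc]
    rw [not_isRightDescent_iff] at hd hr
    rw [not_isLeftDescent_iff] at hl
    rw [IsLeftDescent, ← mul_assoc]
    omega

lemma demazureStep_leftDemazureWord (z : W) (m : List B) (i : B) :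
    cs.demazureStep (cs.leftDemazureWord z m) i = cs.leftDemazureWord (cs.demazureStep z i) m := by
  induction m generalizing z with
  | nil => rfl
  | cons j m ih =>
    simp only [leftDemazureWord, List.foldl_cons] at ih ⊢
    rw [ih, demazureStep_leftDemazureStep]

lemma invWord_concat (σ : W → W) (x : W) (l : List B) (i : B) :
    invWord cs σ x (l ++ [i]) = invStep cs σ (invWord cs σ x l) i :=
  List.foldl_append ..

variable (cs) in
/-- `σ` is the automorphism `*` of a twisted Coxeter system `(W, S, *)`. -/
structure IsTwist (σ : W → W) : Prop where
  map_mul : ∀ u v : W, σ (u * v) = σ u * σ v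
  involutive : Function.Involutive σ
  exists_map_simple : ∀ i : B, ∃ j : B, σ (cs.simple i) = cs.simple j

namespace IsTwist

variable {σ : W → W} (hσ : cs.IsTwist σ)
include hσ

def toMonoidHom : W →* W := MonoidHom.mk' σ hσ.map_mul

lemma map_inv (w : W) : σ w⁻¹ = (σ w)⁻¹ := _root_.map_inv hσ.toMonoidHom w

noncomputable def index (i : B) : B := (hσ.exists_map_simple i).choose

lemma map_simple (i : B) : σ (cs.simple i) = cs.simple (hσ.index i) :=
  (hσ.exists_map_simple i).choose_spec

lemma map_wordProd (l : List B) : σ (cs.wordProd l) = cs.wordProd (l.map hσ.index) := by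
  induction l with
  | nil => exact _root_.map_one hσ.toMonoidHom
  | cons i l ih => rw [wordProd_cons, hσ.map_mul, ih, hσ.map_simple, List.map_cons, wordProd_cons]

lemma length_map (w : W) : cs.length (σ w) = cs.length w := by
  have hle (v : W) : cs.length (σ v) ≤ cs.length v := by
    obtain ⟨ω, hω, rfl⟩ := cs.exists_isReduced v
    rw [hσ.map_wordProd, hω, ← List.length_map hσ.index]
    exact cs.length_wordProd_le _
  exact (hle w).antisymm (by simpa [hσ.involutive w] using hle (σ w))

lemma isRightDescent_map_iff (z : W) (i : B) :
    cs.IsRightDescent (σ z) (hσ.index i) ↔ cs.IsRightDescent z i := by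
  rw [IsRightDescent, IsRightDescent, ← hσ.map_simple, ← hσ.map_mul, hσ.length_map,
    hσ.length_map]

lemma map_demazureStep (z : W) (i : B) :
    σ (cs.demazureStep z i) = cs.demazureStep (σ z) (hσ.index i) := by
  by_cases h : cs.IsRightDescent z i
  · rw [demazureStep_of_isRightDescent h,
      demazureStep_of_isRightDescent ((hσ.isRightDescent_map_iff z i).mpr h)]
  · rw [demazureStep_of_not_isRightDescent h,
      demazureStep_of_not_isRightDescent (mt (hσ.isRightDescent_map_iff z i).mp h), hσ.map_mul,
      hσ.map_simple]

lemma demazureWord_one_map (l : List B) :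
    cs.demazureWord 1 (l.map hσ.index) = σ (cs.demazureWord 1 l) := by
  induction l using List.reverseRecOn with
  | nil => exact (_root_.map_one hσ.toMonoidHom).symm
  | append_singleton l i ih =>
    rw [List.map_append, List.map_singleton, demazureWord_concat, demazureWord_concat, ih,
      hσ.map_demazureStep]

variable {x : W} (hx : x⁻¹ = σ x)
include hx

lemma length_map_simple_mul (i : B) :
    cs.length (σ (cs.simple i) * x) = cs.length (x * cs.simple i) := by
  rw [← cs.length_inv (x * cs.simple i), mul_inv_rev, inv_simple, ← hσ.length_map, hσ.map_mul,
    hx, hσ.involutive]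

lemma invStep_eq_leftDemazureStep_demazureStep (i : B) :
    invStep cs σ x i = cs.leftDemazureStep (cs.demazureStep x i) (hσ.index i) := by
  have hlen := hσ.length_map_simple_mul hx i
  rw [hσ.map_simple] at hlen
  by_cases hd : cs.length (x * cs.simple i) < cs.length x
  · rw [invStep, if_pos hd, demazureStep_of_isRightDescent hd,
      leftDemazureStep_of_isLeftDescent (by rwa [IsLeftDescent, hlen])]
  rw [invStep, if_neg hd, demazureStep_of_not_isRightDescent hd]
  have hasc := cs.not_isRightDescent_iff.mp hd
  by_cases hc : σ (cs.simple i) * x = x * cs.simple i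
  · rw [if_pos hc, leftDemazureStep_of_isLeftDescent]
    rw [IsLeftDescent, ← mul_assoc, ← hσ.map_simple, hc, simple_mul_simple_cancel_right]
    omega
  · rw [if_neg hc, leftDemazureStep_of_not_isLeftDescent, hσ.map_simple, mul_assoc]
    -- If `s* x s` were not longer than `x`, it would equal `x`.
    have hne : cs.simple (hσ.index i) * x * cs.simple i ≠ x := fun h =>
      hc (by rw [hσ.map_simple]; conv_rhs => rw [← h, simple_mul_simple_cancel_right])
    have hgt : cs.length x < cs.length (cs.simple (hσ.index i) * x * cs.simple i) :=
      not_le.mp fun hle => hne (cs.simple_mul_mul_simple_eq_self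
        (by rw [cs.not_isLeftDescent_iff]; omega) hd hle)
    have := cs.length_mul_simple (cs.simple (hσ.index i) * x) i
    rw [IsLeftDescent, ← mul_assoc]
    omega

lemma inv_invStep (i : B) : (invStep cs σ x i)⁻¹ = σ (invStep cs σ x i) := by
  have hs : (σ (cs.simple i))⁻¹ = σ (cs.simple i) := by rw [← hσ.map_inv, inv_simple]
  unfold invStep
  split_ifs with hd hc
  · exact hx
  · rw [mul_inv_rev, inv_simple, hσ.map_mul, ← hx]
    calc cs.simple i * x⁻¹ = x⁻¹ * (σ (cs.simple i) * x) * x⁻¹ := by rw [hc]; group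
      _ = x⁻¹ * σ (cs.simple i) := by group
  · rw [mul_inv_rev, mul_inv_rev, inv_simple, hσ.map_mul, hσ.map_mul, ← hx, hσ.involutive, hs,
      mul_assoc]

lemma inv_invWord (l : List B) : (invWord cs σ x l)⁻¹ = σ (invWord cs σ x l) := by
  induction l using List.reverseRecOn with
  | nil => exact hx
  | append_singleton l i ih =>
    rw [invWord_concat]
    exact hσ.inv_invStep ih i

lemma invWord_eq_leftDemazureWord (l : List B) :
    invWord cs σ x l = cs.leftDemazureWord (cs.demazureWord x l) (l.map hσ.index) := by
  induction l using List.reverseRecOn with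
  | nil => rfl
  | append_singleton l i ih =>
    rw [invWord_concat, hσ.invStep_eq_leftDemazureStep_demazureStep (hσ.inv_invWord hx l), ih,
      demazureStep_leftDemazureWord, List.map_append, List.map_singleton, demazureWord_concat,
      leftDemazureWord_concat]

theorem invWord_congr {l m : List B} (h : cs.demazureWord 1 l = cs.demazureWord 1 m) :
    invWord cs σ x l = invWord cs σ x m := by
  have hmap : cs.demazureWord 1 (l.map hσ.index) = cs.demazureWord 1 (m.map hσ.index) := by
    rw [hσ.demazureWord_one_map, hσ.demazureWord_one_map, h]
  rw [hσ.invWord_eq_leftDemazureWord hx, hσ.invWord_eq_leftDemazureWord hx,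
    leftDemazureWord_eq_inv, leftDemazureWord_eq_inv, demazureWord_congr h, demazureWord_congr hmap]

variable {y : W}

lemma demazureWord_one_mem_heckeAtoms {l : List B} (hl : invWord cs σ x l = y) :
    cs.demazureWord 1 l ∈ HeckeAtoms cs σ x y := by
  obtain ⟨ρ, hρ, hπ⟩ := cs.exists_isReduced (cs.demazureWord 1 l)
  refine ⟨ρ, hπ.symm, hρ, ?_⟩
  rwa [hσ.invWord_congr hx (m := l) (by rw [demazureWord_one_of_isReduced hρ, ← hπ])]

lemma invWord_of_mem_heckeAtoms {w : W} (hw : w ∈ HeckeAtoms cs σ x y) {l : List B}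
    (hl : l ∈ ReducedWords cs w) : invWord cs σ x l = y := by
  obtain ⟨ρ, hπ, hρ, hρy⟩ := hw
  rwa [hσ.invWord_congr hx (m := ρ) (by rw [demazureWord_one_of_isReduced hl.2, hl.1,
    demazureWord_one_of_isReduced hρ, hπ])]

end IsTwist

end CoxeterSystem

theorem involution_words_eq_union_reduced_words_of_atoms_general
    (cs : CoxeterSystem M W) (σ : W → W)
    (hmul : ∀ u v : W, σ (u * v) = σ u * σ v)
    (hinvol : ∀ w : W, σ (σ w) = w)
    (hgen : ∀ i : B, ∃ j : B, σ (cs.simple i) = cs.simple j)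
    (x y : W) (hx : x⁻¹ = σ x) :
    InvWords cs σ x y = ⋃ w ∈ Atoms cs σ x y, ReducedWords cs w := by
  have hσ : cs.IsTwist σ := ⟨hmul, hinvol, hgen⟩
  ext l
  simp only [Set.mem_iUnion, exists_prop]
  constructor
  · rintro ⟨hl, hmin⟩
    have hle (v : W) (hv : v ∈ HeckeAtoms cs σ x y) : l.length ≤ cs.length v := by
      obtain ⟨ρ, hρ, hπ⟩ := cs.exists_isReduced v
      simpa [hπ, hρ.eq] using hmin ρ (hσ.invWord_of_mem_heckeAtoms hx hv ⟨hπ.symm, hρ⟩)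
    have hδ := hσ.demazureWord_one_mem_heckeAtoms hx hl
    have hred := isReduced_of_length_demazureWord_one
      ((length_demazureWord_one_le l).antisymm (hle _ hδ))
    have hδl := demazureWord_one_of_isReduced hred
    refine ⟨_, ⟨hδ, fun v hv => ?_⟩, hδl.symm, hred⟩
    rw [hδl, hred.eq]
    exact hle v hv
  · rintro ⟨w, ⟨hw, hwmin⟩, hl⟩
    refine ⟨hσ.invWord_of_mem_heckeAtoms hx hw hl, fun l' hl' => ?_⟩
    calc l.length = cs.length w := by rw [← hl.1, hl.2.eq]
      _ ≤ cs.length (cs.demazureWord 1 l') := hwmin _ (hσ.demazureWord_one_mem_heckeAtoms hx hl')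
      _ ≤ l'.length := length_demazureWord_one_le l'

/-- For twisted involutions `x, y` in a twisted Coxeter system `(W, S, *)`,
the involution words of `y` relative to `x` are exactly the reduced words of the atoms of `y`
relative to `x`: `R̂_*(x,y) = ⋃_{w ∈ A_*(x,y)} R(w)`.  Consequently each set `R̂_*(x,y)` is
preserved by the braid relations of `(W, S)`. -/
theorem involution_words_eq_union_reduced_words_of_atoms
    (cs : CoxeterSystem M W) (σ : W → W)
    (hmul : ∀ u v : W, σ (u * v) = σ u * σ v)
    (hinvol : ∀ w : W, σ (σ w) = w)
    (hgen : ∀ i : B, ∃ j : B, σ (cs.simple i) = cs.simple j)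
    (x y : W) (hx : x⁻¹ = σ x) (hy : y⁻¹ = σ y) :
    InvWords cs σ x y = ⋃ w ∈ Atoms cs σ x y, ReducedWords cs w :=
  involution_words_eq_union_reduced_words_of_atoms_general cs σ hmul hinvol hgen x y hx
end

section
/- Let y ∈ I(S_n) and w ∈ S_n. Then w ∈ A(y) := A(1,y) if and only if the following hold: (a) if (a,b) ∈ Cyc(y) then w(b) ≤ w(a); (b) if (a,b) ∈ Cyc(y) then there is no integer t with a < t < b such that w(b) < w(t) < w(a); (c) if (a,b), (a',b') ∈ Cyc(y) are such that a < a' and b < b', then w(b) ≤ w(a) < w(b') ≤ w(a'). -/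
/-!
Write `ℓ̂(y) = (ℓ(y) + κ(y)) / 2` for the involution length, `κ(y)` the number of 2-cycles.
Each letter `s` of a word raises `ℓ + κ` of the involution `x ⋉ s` by `0` (when `x ⋉ s = x`) or
by `2`, so every element of `B(1, y)` has length at least `ℓ̂(y)`, with equality exactly when no
letter of a reduced word acts trivially.

The conditions (a)–(c) are compatible with these moves: if `s` is a right descent of `w`, they hold
for `(w, y)` iff they hold for `(w s, y')` where `y = y' ⋉ s` is `y' s` (when `s` commutes with `y`)
or `s y' s`. By induction on `ℓ(w)`, any `w` satisfying (a)–(c) lies in `B(1, y)` with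
`ℓ(w) = ℓ̂(y)`, and any element of `B(1, y)` of length `ℓ̂(y)` satisfies (a)–(c). Listing the
2-cycles by their smaller entry gives one such `w`, so `ℓ̂(y)` is the minimal length and `A(y)`
is exactly the set cut out by (a)–(c).
-/

open Equiv
open scoped Classical

/-- The simple transposition `s_{i+1} = (i+1, i+2)` of `S_n` (zero-indexed: it swaps the
elements `i` and `i + 1` of `Fin n`), or the identity if `i + 1 ≥ n`. -/
def sP (n : ℕ) (i : ℕ) : Equiv.Perm (Fin n) :=
  if h : i + 1 < n then Equiv.swap ⟨i, Nat.lt_of_succ_lt h⟩ ⟨i + 1, h⟩ else 1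

/-- The Coxeter length of a permutation: its number of inversions. -/
noncomputable def lenP {n : ℕ} (w : Equiv.Perm (Fin n)) : ℕ :=
  (Finset.univ.filter (fun p : Fin n × Fin n => p.1 < p.2 ∧ w p.2 < w p.1)).card

/-- One step of the conjugation action of the `0`-Hecke monoid on involutions:
`x ⋉ s = (s⁻¹ ∘ x) ∘ s` where `∘` is the Demazure product. -/
noncomputable def iStep {n : ℕ} (x : Equiv.Perm (Fin n)) (i : ℕ) : Equiv.Perm (Fin n) :=
  if lenP (x * sP n i) < lenP x then x
  else if sP n i * x = x * sP n i then x * sP n i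
  else sP n i * x * sP n i

/-- Iterated action `((x ⋉ s_{i₁}) ⋉ s_{i₂}) ⋉ ⋯ ⋉ s_{iₖ}` of a word on an involution. -/
noncomputable def iWord {n : ℕ} (x : Equiv.Perm (Fin n)) (l : List ℕ) : Equiv.Perm (Fin n) :=
  l.foldl iStep x

/-- Product of the word `(s_{i₁}, …, s_{iₖ})` in `S_n`. -/
def wordProdP (n : ℕ) (l : List ℕ) : Equiv.Perm (Fin n) := (l.map (sP n)).prod

/-- A word is reduced if its length equals the length of its product. -/
noncomputable def ReducedWordP (n : ℕ) (l : List ℕ) : Prop :=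
  lenP (wordProdP n l) = l.length

/-- The Hecke atoms `B(x, y) = {w ∈ S_n : x ⋉ w = y}`:  `x ⋉ w` is computed by applying any
reduced word of `w` letter by letter. -/
noncomputable def HeckeP (n : ℕ) (x y : Equiv.Perm (Fin n)) : Set (Equiv.Perm (Fin n)) :=
  {w | ∃ l : List ℕ, wordProdP n l = w ∧ ReducedWordP n l ∧ iWord x l = y}

/-- The atoms `A(x, y)`: minimal-length elements of `B(x, y)`. -/
noncomputable def AtomsP (n : ℕ) (x y : Equiv.Perm (Fin n)) : Set (Equiv.Perm (Fin n)) :=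
  {w ∈ HeckeP n x y | ∀ v ∈ HeckeP n x y, lenP w ≤ lenP v}

/-- The involution words `R̂(x, y)` of `y` relative to `x`. -/
noncomputable def InvWordsP (n : ℕ) (x y : Equiv.Perm (Fin n)) : Set (List ℕ) :=
  {l | iWord x l = y ∧ ∀ l' : List ℕ, iWord x l' = y → l.length ≤ l'.length}

/-- The fixed-point-free involution `w_fpf = s_1 s_3 s_5 ⋯ s_{2n-1} ∈ S_{2n}`. -/
def wfpfP (n : ℕ) : Equiv.Perm (Fin (2 * n)) :=
  ((List.range n).map (fun i => sP (2 * n) (2 * i))).prod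

namespace HeckeAtom

variable {n : ℕ}

theorem invol_apply {y : Perm (Fin n)} (hy : y * y = 1) (a : Fin n) : y (y a) = a := by
  rw [← Perm.mul_apply, hy, Perm.one_apply]

section AdjacentSwap

theorem exists_adjacent {i : ℕ} (hi : i + 1 < n) : ∃ p q : Fin n, (p : ℕ) + 1 = q ∧ (p : ℕ) = i :=
  ⟨⟨i, by omega⟩, ⟨i + 1, hi⟩, rfl, rfl⟩

variable {p q : Fin n}

theorem sP_eq_swap (hpq : (p : ℕ) + 1 = q) : sP n p = swap p q := by
  rw [sP, dif_pos (hpq ▸ q.isLt)]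
  congr

theorem sP_eq_one {i : ℕ} (hi : ¬ i + 1 < n) : sP n i = 1 := by
  rw [sP, dif_neg hi]

theorem swap_lt_swap (hpq : (p : ℕ) + 1 = q) {a b : Fin n} (hab : a < b)
    (hne : ¬(a = p ∧ b = q)) : swap p q a < swap p q b := by
  simp only [swap_apply_def]
  split_ifs <;> simp_all [Fin.ext_iff] <;> omega

theorem swap_lt_swap_or (hpq : (p : ℕ) + 1 = q) {a b : Fin n} (hab : a < b) :
    swap p q a < swap p q b ∨ (a = p ∧ b = q) := by
  by_cases h : a = p ∧ b = q
  · exact Or.inr h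
  · exact Or.inl (swap_lt_swap hpq hab h)

theorem swap_apply_mem_Ioo (hpq : (p : ℕ) + 1 = q) {a b t : Fin n} (ha : a ≠ p ∧ a ≠ q)
    (hb : b ≠ p ∧ b ≠ q) (ht : t ∈ Set.Ioo a b) : swap p q t ∈ Set.Ioo a b := by
  obtain ⟨hat, htb⟩ := ht
  simp only [Set.mem_Ioo, swap_apply_def]
  split_ifs <;> simp_all [Fin.ext_iff] <;> omega

end AdjacentSwap

section Length

theorem lenP_one : lenP (1 : Perm (Fin n)) = 0 := by
  rw [lenP, Finset.card_eq_zero, Finset.filter_eq_empty_iff]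
  exact fun _ _ h => lt_asymm h.1 h.2

theorem lenP_inv (w : Perm (Fin n)) : lenP w⁻¹ = lenP w := by
  refine Finset.card_equiv ((Equiv.prodComm _ _).trans (w⁻¹.prodCongr w⁻¹)) fun x => ?_
  simp [and_comm]

theorem lenP_mul_swap_of_lt {p q : Fin n} (hpq : (p : ℕ) + 1 = q) (w : Perm (Fin n))
    (h : w p < w q) : lenP (w * swap p q) = lenP w + 1 := by
  have hreindex : lenP (w * swap p q) = (Finset.univ.filter fun x : Fin n × Fin n =>
      swap p q x.1 < swap p q x.2 ∧ w x.2 < w x.1).card := by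
    refine Finset.card_equiv ((swap p q).prodCongr (swap p q)) fun x => ?_
    simp only [Finset.mem_filter]
    simp
  -- Relabelling by `swap p q` only changes how `p` and `q` compare.
  have hset : (Finset.univ.filter fun x : Fin n × Fin n =>
      swap p q x.1 < swap p q x.2 ∧ w x.2 < w x.1) = insert (q, p)
      (Finset.univ.filter fun x : Fin n × Fin n => x.1 < x.2 ∧ w x.2 < w x.1) := by
    ext ⟨a, b⟩
    simp only [Finset.mem_filter, Finset.mem_univ, true_and, Finset.mem_insert, Prod.mk.injEq]
    simp only [swap_apply_def]
    split_ifs <;> subst_vars <;> simp_all [Fin.ext_iff] <;> omega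
  rw [hreindex, hset, Finset.card_insert_of_notMem (by simp; omega)]
  rfl

theorem lenP_mul_swap_of_gt {p q : Fin n} (hpq : (p : ℕ) + 1 = q) (w : Perm (Fin n))
    (h : w q < w p) : lenP w = lenP (w * swap p q) + 1 := by
  simpa [mul_assoc] using lenP_mul_swap_of_lt hpq (w * swap p q) (by simpa using h)

theorem lenP_mul_sP_le (w : Perm (Fin n)) (i : ℕ) : lenP (w * sP n i) ≤ lenP w + 1 := by
  by_cases hi : i + 1 < n
  · obtain ⟨p, q, hpq, rfl⟩ := exists_adjacent hi
    rw [sP_eq_swap hpq]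
    rcases lt_or_gt_of_ne (w.injective.ne (show p ≠ q by omega)) with h | h
    · rw [lenP_mul_swap_of_lt hpq w h]
    · rw [lenP_mul_swap_of_gt hpq w h]; omega
  · rw [sP_eq_one hi, mul_one]; omega

theorem exists_descent {w : Perm (Fin n)} (hw : w ≠ 1) :
    ∃ p q : Fin n, (p : ℕ) + 1 = q ∧ w q < w p := by
  by_contra! hasc
  have hmono : StrictMono w := by
    obtain _ | m := n
    · exact fun a => a.elim0
    refine Fin.strictMono_iff_lt_succ.2 fun i => ?_
    exact (hasc _ _ rfl).lt_of_ne (w.injective.ne Fin.castSucc_lt_succ.ne)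
  refine hw (DFunLike.ext' ((hmono.range_inj strictMono_id).1 ?_))
  simp

end Length

section InvolutionStep

/-- `ℓ(x) + κ(x)`, where `κ(x)` counts the 2-cycles when `x` is an involution; this is twice the
involution length `ℓ̂(x)`. -/
noncomputable def twiceInvLength (x : Perm (Fin n)) : ℕ :=
  lenP x + (Finset.univ.filter fun a => a < x a).card

variable {p q : Fin n} {x : Perm (Fin n)}

theorem iStep_of_not_lt {i : ℕ} (hi : ¬ i + 1 < n) : iStep x i = x := by
  rw [iStep, sP_eq_one hi, mul_one, if_neg (lt_irrefl _), one_mul, if_pos rfl]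

theorem iStep_of_gt (hpq : (p : ℕ) + 1 = q) (h : x q < x p) : iStep x p = x := by
  have := lenP_mul_swap_of_gt hpq x h
  rw [iStep, sP_eq_swap hpq, if_pos (by omega)]

theorem iStep_of_fixed (hpq : (p : ℕ) + 1 = q) (hp : x p = p) (hq : x q = q) :
    iStep x p = x * swap p q := by
  have hlen := lenP_mul_swap_of_lt hpq x (by rw [hp, hq]; omega)
  have hcomm : swap p q * x = x * swap p q := by rw [mul_swap_eq_swap_mul, hp, hq]
  rw [iStep, sP_eq_swap hpq, if_neg (by omega), if_pos hcomm]

theorem iStep_of_lt (hpq : (p : ℕ) + 1 = q) (h : x p < x q) (hnf : ¬(x p = p ∧ x q = q)) :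
    iStep x p = swap p q * x * swap p q := by
  have hlen := lenP_mul_swap_of_lt hpq x h
  have hncomm : swap p q * x ≠ x * swap p q := by
    rw [mul_swap_eq_swap_mul]
    intro hc
    have hxp : swap p q (x p) = x q := by simpa using congrArg (· (x p)) (mul_right_cancel hc)
    by_cases h1 : x p = p
    · rw [h1, swap_apply_left] at hxp
      exact hnf ⟨h1, hxp.symm⟩
    by_cases h2 : x p = q
    · rw [h2, swap_apply_right] at hxp
      rw [h2, ← hxp] at h
      omega
    · rw [swap_apply_of_ne_of_ne h1 h2] at hxp
      exact absurd (x.injective hxp) (by simp [Fin.ext_iff]; omega)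
  rw [iStep, sP_eq_swap hpq, if_neg (by omega), if_neg hncomm]

theorem twiceInvLength_mul_swap (hpq : (p : ℕ) + 1 = q) (hp : x p = p) (hq : x q = q) :
    twiceInvLength (x * swap p q) = twiceInvLength x + 2 := by
  have hlen := lenP_mul_swap_of_lt hpq x (by rw [hp, hq]; omega)
  have hexc : (Finset.univ.filter fun a => a < (x * swap p q) a) =
      insert p (Finset.univ.filter fun a => a < x a) := by
    ext a
    simp only [Finset.mem_filter, Finset.mem_univ, true_and, Finset.mem_insert]
    simp only [Perm.mul_apply, swap_apply_def]
    split_ifs <;> subst_vars <;> simp_all <;> omega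
  rw [twiceInvLength, twiceInvLength, hlen, hexc, Finset.card_insert_of_notMem (by simp [hp])]
  ring

theorem twiceInvLength_conj_swap (hpq : (p : ℕ) + 1 = q) (hx : x * x = 1) (h : x p < x q)
    (hnf : ¬(x p = p ∧ x q = q)) :
    twiceInvLength (swap p q * x * swap p q) = twiceInvLength x + 2 := by
  have hxinv : x⁻¹ = x := inv_eq_of_mul_eq_one_right hx
  have hlen₁ : lenP (swap p q * x) = lenP x + 1 := by
    rw [← lenP_inv, mul_inv_rev, hxinv, swap_inv, lenP_mul_swap_of_lt hpq x h]
  have hlen₂ := lenP_mul_swap_of_lt hpq (swap p q * x) (swap_lt_swap hpq h hnf)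
  have hxp : x p ≠ q := fun e => by rw [← e, invol_apply hx] at h; omega
  have hxq : x q ≠ p := fun e => by rw [← e, invol_apply hx] at h; omega
  have hexc : (Finset.univ.filter fun a => a < x a).card =
      (Finset.univ.filter fun a => a < (swap p q * x * swap p q) a).card := by
    refine Finset.card_equiv (swap p q) fun a => ?_
    simp only [Finset.mem_filter, Finset.mem_univ, true_and]
    simp only [Perm.mul_apply, swap_apply_self]
    constructor
    · intro ha
      refine swap_lt_swap hpq ha ?_
      rintro ⟨rfl, e⟩
      exact hxp e
    · intro ha
      have key := swap_lt_swap hpq ha ?_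
      · simpa using key
      rintro ⟨e₁, e₂⟩
      rw [swap_apply_eq_iff, swap_apply_left] at e₁
      rw [swap_apply_eq_iff, swap_apply_right] at e₂
      exact hxq (e₁ ▸ e₂)
  rw [twiceInvLength, twiceInvLength, hlen₂, hlen₁, ← hexc]
  ring

theorem mul_swap_mul_self (hx : x * x = 1) (hp : x p = p) (hq : x q = q) :
    x * swap p q * (x * swap p q) = 1 := by
  have hcomm : swap p q * x = x * swap p q := by rw [mul_swap_eq_swap_mul, hp, hq]
  calc x * swap p q * (x * swap p q) = x * (swap p q * x) * swap p q := by simp only [mul_assoc]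
    _ = 1 := by rw [hcomm, ← mul_assoc x x, hx, one_mul, swap_mul_self]

theorem conj_swap_mul_self (hx : x * x = 1) :
    swap p q * x * swap p q * (swap p q * x * swap p q) = 1 := by
  simp only [mul_assoc]
  rw [← mul_assoc (swap p q) (swap p q), swap_mul_self, one_mul, ← mul_assoc x x, hx, one_mul,
    swap_mul_self]

theorem twiceInvLength_iStep_of_lt (hpq : (p : ℕ) + 1 = q) (hx : x * x = 1) (h : x p < x q) :
    twiceInvLength (iStep x p) = twiceInvLength x + 2 := by
  by_cases hnf : x p = p ∧ x q = q
  · rw [iStep_of_fixed hpq hnf.1 hnf.2, twiceInvLength_mul_swap hpq hnf.1 hnf.2]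
  · rw [iStep_of_lt hpq h hnf, twiceInvLength_conj_swap hpq hx h hnf]

theorem iStep_mul_self_and_twiceInvLength_le (hx : x * x = 1) (i : ℕ) :
    iStep x i * iStep x i = 1 ∧ twiceInvLength (iStep x i) ≤ twiceInvLength x + 2 := by
  by_cases hi : i + 1 < n
  · obtain ⟨p, q, hpq, rfl⟩ := exists_adjacent hi
    rcases lt_or_gt_of_ne (x.injective.ne (show p ≠ q by omega)) with h | h
    · refine ⟨?_, (twiceInvLength_iStep_of_lt hpq hx h).le⟩
      by_cases hnf : x p = p ∧ x q = q
      · rw [iStep_of_fixed hpq hnf.1 hnf.2]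
        exact mul_swap_mul_self hx hnf.1 hnf.2
      · rw [iStep_of_lt hpq h hnf]
        exact conj_swap_mul_self hx
    · rw [iStep_of_gt hpq h]
      exact ⟨hx, by omega⟩
  · rw [iStep_of_not_lt hi]
    exact ⟨hx, by omega⟩

end InvolutionStep

section Words

theorem iWord_append_singleton (x : Perm (Fin n)) (l : List ℕ) (i : ℕ) :
    iWord x (l ++ [i]) = iStep (iWord x l) i := by
  simp [iWord, List.foldl_append]

theorem wordProdP_append_singleton (l : List ℕ) (i : ℕ) :
    wordProdP n (l ++ [i]) = wordProdP n l * sP n i := by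
  simp [wordProdP]

theorem lenP_wordProdP_le (l : List ℕ) : lenP (wordProdP n l) ≤ l.length := by
  induction l using List.reverseRecOn with
  | nil => simp [wordProdP, lenP_one]
  | append_singleton l i ih =>
    rw [wordProdP_append_singleton, List.length_append, List.length_singleton]
    exact (lenP_mul_sP_le _ i).trans (by omega)

theorem twiceInvLength_one : twiceInvLength (1 : Perm (Fin n)) = 0 := by
  simp [twiceInvLength, lenP_one]

theorem iWord_one_mul_self_and_twiceInvLength_le (l : List ℕ) :
    iWord (1 : Perm (Fin n)) l * iWord 1 l = 1 ∧
      twiceInvLength (iWord (1 : Perm (Fin n)) l) ≤ 2 * l.length := by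
  induction l using List.reverseRecOn with
  | nil => simp [iWord, twiceInvLength_one]
  | append_singleton l i ih =>
    rw [iWord_append_singleton, List.length_append, List.length_singleton]
    obtain ⟨hmul, hle⟩ := iStep_mul_self_and_twiceInvLength_le ih.1 i
    exact ⟨hmul, by omega⟩

theorem twiceInvLength_le_of_mem_heckeP {v y : Perm (Fin n)} (hv : v ∈ HeckeP n 1 y) :
    twiceInvLength y ≤ 2 * lenP v := by
  obtain ⟨l, rfl, hred, rfl⟩ := hv
  rw [hred]
  exact (iWord_one_mul_self_and_twiceInvLength_le l).2

theorem mem_heckeP_mul_swap {p q : Fin n} (hpq : (p : ℕ) + 1 = q) {w y : Perm (Fin n)}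
    (hw : w ∈ HeckeP n 1 y) (hlen : lenP (w * swap p q) = lenP w + 1) :
    w * swap p q ∈ HeckeP n 1 (iStep y p) := by
  obtain ⟨l, rfl, hred, rfl⟩ := hw
  refine ⟨l ++ [(p : ℕ)], ?_, ?_, iWord_append_singleton 1 l p⟩
  · rw [wordProdP_append_singleton, sP_eq_swap hpq]
  · rw [ReducedWordP, wordProdP_append_singleton, sP_eq_swap hpq, hlen, hred,
      List.length_append, List.length_singleton]

end Words

section Conditions

def IsCyc (y : Perm (Fin n)) (a b : Fin n) : Prop := a ≤ b ∧ y a = b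

variable {p q : Fin n} {w y : Perm (Fin n)}

theorem IsCyc.apply_right (hy : y * y = 1) {a b : Fin n} (h : IsCyc y a b) : y b = a := by
  rw [← h.2, invol_apply hy]

theorem isCyc_min_max (hy : y * y = 1) (u : Fin n) : IsCyc y (min u (y u)) (max u (y u)) := by
  rcases le_total u (y u) with h | h
  · simp [IsCyc, h]
  · simp [IsCyc, h, invol_apply hy]

theorem isCyc_mul_swap_iff_of_apply_eq (hy : y * y = 1) (hyp : y p = q) {a b : Fin n} :
    IsCyc (y * swap p q) a b ↔
      (a = p ∧ b = p) ∨ (a = q ∧ b = q) ∨ (IsCyc y a b ∧ a ≠ p ∧ a ≠ q ∧ b ≠ p ∧ b ≠ q) := by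
  have hyy := invol_apply hy
  have hyq : y q = p := by rw [← hyp, hyy]
  simp only [IsCyc, Perm.mul_apply, swap_apply_def]
  split_ifs <;> subst_vars <;> grind

theorem isCyc_mul_swap_iff_of_fixed (hpq : (p : ℕ) + 1 = q) (hp : y p = p) (hq : y q = q)
    {a b : Fin n} :
    IsCyc (y * swap p q) a b ↔
      (a = p ∧ b = q) ∨ (IsCyc y a b ∧ a ≠ p ∧ a ≠ q ∧ b ≠ p ∧ b ≠ q) := by
  have hinj := y.injective
  simp only [IsCyc, Perm.mul_apply, swap_apply_def]
  split_ifs <;> subst_vars <;> grind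

theorem isCyc_conj_swap_iff (hpq : (p : ℕ) + 1 = q) (hy : y * y = 1) (hyp : y p ≠ q)
    {a b : Fin n} : IsCyc (swap p q * y * swap p q) a b ↔ IsCyc y (swap p q a) (swap p q b) := by
  have hyy := invol_apply hy
  simp only [IsCyc, Perm.mul_apply, swap_apply_def]
  split_ifs <;> subst_vars <;> grind

/-- Conditions (a), (b), (c); of (c) only the middle inequality `w a < w b'` is kept, the other
two being instances of (a). -/
structure AtomCond (w y : Perm (Fin n)) : Prop where
  le_of_isCyc : ∀ ⦃a b⦄, IsCyc y a b → w b ≤ w a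
  not_between : ∀ ⦃a b⦄, IsCyc y a b → ∀ ⦃t⦄, a < t → t < b → ¬(w b < w t ∧ w t < w a)
  lt_of_isCyc_lt : ∀ ⦃a b a' b'⦄, IsCyc y a b → IsCyc y a' b' → a < a' → b < b' → w a < w b'

theorem atomCond_iff : AtomCond w y ↔
    ((∀ a b : Fin n, a ≤ b → y a = b → w b ≤ w a) ∧
     (∀ a b : Fin n, a ≤ b → y a = b →
        ∀ t : Fin n, a < t → t < b → ¬ (w b < w t ∧ w t < w a)) ∧
     (∀ a b a' b' : Fin n, a ≤ b → y a = b → a' ≤ b' → y a' = b' → a < a' → b < b' →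
        w b ≤ w a ∧ w a < w b' ∧ w b' ≤ w a')) := by
  constructor
  · intro hc
    exact ⟨fun a b hab h => hc.le_of_isCyc ⟨hab, h⟩, fun a b hab h => hc.not_between ⟨hab, h⟩,
      fun a b a' b' hab h hab' h' haa' hbb' => ⟨hc.le_of_isCyc ⟨hab, h⟩,
        hc.lt_of_isCyc_lt ⟨hab, h⟩ ⟨hab', h'⟩ haa' hbb', hc.le_of_isCyc ⟨hab', h'⟩⟩⟩
  · rintro ⟨ha, hb, hc⟩
    exact ⟨fun a b h => ha a b h.1 h.2, fun a b h => hb a b h.1 h.2,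
      fun a b a' b' h h' haa' hbb' => (hc a b a' b' h.1 h.2 h'.1 h'.2 haa' hbb').2.1⟩

theorem AtomCond.lt_of_min_lt_of_max_lt (hc : AtomCond w y) (hy : y * y = 1) {u z : Fin n}
    (hmin : min u (y u) < min z (y z)) (hmax : max u (y u) < max z (y z)) : w u < w z := by
  have hu := hc.le_of_isCyc (isCyc_min_max hy u)
  have hz := hc.le_of_isCyc (isCyc_min_max hy z)
  have hcross := hc.lt_of_isCyc_lt (isCyc_min_max hy u) (isCyc_min_max hy z) hmin hmax
  rcases le_total u (y u) with h | h <;> rcases le_total z (y z) with h' | h' <;>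
    simp_all only [min_eq_left, min_eq_right, max_eq_left, max_eq_right] <;> order

theorem AtomCond.lt_of_lt_of_apply_lt (hc : AtomCond w y) (hy : y * y = 1) {u z : Fin n}
    (h : u < z) (hyuz : y u < y z) : w u < w z :=
  hc.lt_of_min_lt_of_max_lt hy (by simp only [lt_min_iff, min_lt_iff]; omega)
    (by simp only [max_lt_iff, lt_max_iff]; omega)

theorem atomCond_one_iff (hy : y * y = 1) : AtomCond 1 y ↔ y = 1 := by
  constructor
  · intro hc
    ext u
    have := hc.le_of_isCyc (isCyc_min_max hy u)
    simp only [Perm.one_apply] at this ⊢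
    rcases le_total u (y u) with h | h <;> simp_all <;> omega
  · rintro rfl
    refine ⟨fun a b h => ?_, fun a b h t hat htb => ?_, fun a b a' b' _ h' ha _ => ?_⟩
    · simp [← h.2]
    · exact absurd (hat.trans htb) (by simp [← h.2])
    · simpa using ha.trans_le h'.1

end Conditions

section Transfer

variable {p q : Fin n} {w y : Perm (Fin n)}

theorem AtomCond.not_between_mul_swap (hpq : (p : ℕ) + 1 = q) (hc : AtomCond w y)
    {a b t : Fin n} (hab : IsCyc y a b) (ha : a ≠ p ∧ a ≠ q) (hb : b ≠ p ∧ b ≠ q)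
    (hat : a < t) (htb : t < b) :
    ¬((w * swap p q) b < (w * swap p q) t ∧ (w * swap p q) t < (w * swap p q) a) := by
  obtain ⟨hat', htb'⟩ := swap_apply_mem_Ioo hpq ha hb ⟨hat, htb⟩
  simpa [swap_apply_of_ne_of_ne ha.1 ha.2, swap_apply_of_ne_of_ne hb.1 hb.2] using
    hc.not_between hab hat' htb'

theorem AtomCond.mul_swap_of_apply_eq (hpq : (p : ℕ) + 1 = q) (hy : y * y = 1) (hyp : y p = q)
    (hw : w q < w p) (hc : AtomCond w y) : AtomCond (w * swap p q) (y * swap p q) := by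
  have hpq_cyc : IsCyc y p q := ⟨by omega, hyp⟩
  have hcyc {a b : Fin n} := (isCyc_mul_swap_iff_of_apply_eq (a := a) (b := b) hy hyp).1
  refine ⟨fun a b h => ?_, fun a b h t hat htb => ?_, fun a b a' b' h h' haa' hbb' => ?_⟩
  · rcases hcyc h with ⟨rfl, rfl⟩ | ⟨rfl, rfl⟩ | ⟨h, ha₁, ha₂, hb₁, hb₂⟩
    · exact le_rfl
    · exact le_rfl
    · simpa [swap_apply_of_ne_of_ne, *] using hc.le_of_isCyc h
  · rcases hcyc h with ⟨rfl, rfl⟩ | ⟨rfl, rfl⟩ | ⟨h, ha₁, ha₂, hb₁, hb₂⟩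
    · exact absurd (hat.trans htb) (lt_irrefl _)
    · exact absurd (hat.trans htb) (lt_irrefl _)
    · exact hc.not_between_mul_swap hpq h ⟨ha₁, ha₂⟩ ⟨hb₁, hb₂⟩ hat htb
  rcases hcyc h with ⟨rfl, rfl⟩ | ⟨rfl, rfl⟩ | ⟨hab, ha₁, ha₂, hb₁, hb₂⟩ <;>
    rcases hcyc h' with ⟨rfl, rfl⟩ | ⟨rfl, rfl⟩ | ⟨hab', ha₁', ha₂', hb₁', hb₂'⟩
  · exact absurd haa' (lt_irrefl _)
  · simpa using hw
  · simpa [swap_apply_of_ne_of_ne hb₁' hb₂'] using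
      hw.trans (hc.lt_of_isCyc_lt hpq_cyc hab' haa' (by omega))
  · exact absurd haa' (by omega)
  · exact absurd haa' (lt_irrefl _)
  · simpa [swap_apply_of_ne_of_ne hb₁' hb₂'] using hc.lt_of_isCyc_lt hpq_cyc hab' (by omega) hbb'
  · simpa [swap_apply_of_ne_of_ne ha₁ ha₂] using hc.lt_of_isCyc_lt hab hpq_cyc haa' (by omega)
  · simpa [swap_apply_of_ne_of_ne ha₁ ha₂] using
      (hc.lt_of_isCyc_lt hab hpq_cyc (by omega) hbb').trans hw
  · simpa [swap_apply_of_ne_of_ne ha₁ ha₂, swap_apply_of_ne_of_ne hb₁' hb₂'] using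
      hc.lt_of_isCyc_lt hab hab' haa' hbb'

theorem AtomCond.mul_swap_of_fixed (hpq : (p : ℕ) + 1 = q) (hp : y p = p) (hq : y q = q) (hw : w p < w q) (hc : AtomCond w y) :
    AtomCond (w * swap p q) (y * swap p q) := by
  have hp_cyc : IsCyc y p p := ⟨le_rfl, hp⟩
  have hq_cyc : IsCyc y q q := ⟨le_rfl, hq⟩
  have hcyc {a b : Fin n} := (isCyc_mul_swap_iff_of_fixed (a := a) (b := b) hpq hp hq).1
  refine ⟨fun a b h => ?_, fun a b h t hat htb => ?_, fun a b a' b' h h' haa' hbb' => ?_⟩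
  · rcases hcyc h with ⟨rfl, rfl⟩ | ⟨h, ha₁, ha₂, hb₁, hb₂⟩
    · simpa using hw.le
    · simpa [swap_apply_of_ne_of_ne, *] using hc.le_of_isCyc h
  · rcases hcyc h with ⟨rfl, rfl⟩ | ⟨h, ha₁, ha₂, hb₁, hb₂⟩
    · omega
    · exact hc.not_between_mul_swap hpq h ⟨ha₁, ha₂⟩ ⟨hb₁, hb₂⟩ hat htb
  rcases hcyc h with ⟨rfl, rfl⟩ | ⟨hab, ha₁, ha₂, hb₁, hb₂⟩ <;>
    rcases hcyc h' with ⟨rfl, rfl⟩ | ⟨hab', ha₁', ha₂', hb₁', hb₂'⟩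
  · exact absurd haa' (lt_irrefl _)
  · simpa [swap_apply_of_ne_of_ne hb₁' hb₂'] using
      hc.lt_of_isCyc_lt hq_cyc hab' (by omega) hbb'
  · simpa [swap_apply_of_ne_of_ne ha₁ ha₂] using hc.lt_of_isCyc_lt hab hp_cyc haa' (by omega)
  · simpa [swap_apply_of_ne_of_ne ha₁ ha₂, swap_apply_of_ne_of_ne hb₁' hb₂'] using
      hc.lt_of_isCyc_lt hab hab' haa' hbb'

theorem AtomCond.conj_swap_of_gt (hpq : (p : ℕ) + 1 = q) (hy : y * y = 1) (hyp : y p ≠ q)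
    (hyd : y q < y p) (hw : w q < w p) (hc : AtomCond w y) :
    AtomCond (w * swap p q) (swap p q * y * swap p q) := by
  have hcyc {a b : Fin n} := (isCyc_conj_swap_iff (a := a) (b := b) hpq hy hyp).1
  refine ⟨fun a b h => hc.le_of_isCyc (hcyc h), fun a b h t hat htb => ?_,
    fun a b a' b' h h' haa' hbb' => ?_⟩
  · simp only [Perm.mul_apply]
    rcases swap_lt_swap_or hpq hat with hat' | ⟨ha, ht⟩
    · rcases swap_lt_swap_or hpq htb with htb' | ⟨ht, hb⟩
      · exact hc.not_between (hcyc h) hat' htb'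
      · subst t b
        simp only [swap_apply_left, swap_apply_right]
        exact fun h => hw.asymm h.1
    · subst a t
      simp only [swap_apply_left, swap_apply_right]
      exact fun h => hw.asymm h.2
  have hab := hcyc h
  have hab' := hcyc h'
  simp only [Perm.mul_apply]
  rcases swap_lt_swap_or hpq haa' with haa'' | ⟨ha, ha'⟩ <;>
    rcases swap_lt_swap_or hpq hbb' with hbb'' | ⟨hb, hb'⟩
  · exact hc.lt_of_isCyc_lt hab hab' haa'' hbb''
  · subst b b'
    simp only [swap_apply_left, swap_apply_right] at hab hab' ⊢
    have hlt : swap p q a < p := haa''.trans_le hab'.1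
    have := hc.not_between hab hlt (by omega : p < q)
    exact lt_of_le_of_ne (not_lt.1 fun h => this ⟨hw, h⟩) (w.injective.ne hlt.ne)
  · subst a a'
    simp only [swap_apply_left, swap_apply_right] at hab hab' ⊢
    have hlt : q < swap p q b' := hab.1.trans_lt hbb''
    have := hc.not_between hab' (by omega : p < q) hlt
    exact lt_of_le_of_ne (not_lt.1 fun h => this ⟨h, hw⟩) (w.injective.ne hlt.ne)
  · subst a a' b b'
    simp only [swap_apply_left, swap_apply_right, IsCyc] at hab hab'
    rw [hab.2, hab'.2] at hyd
    omega

theorem AtomCond.not_between_conj_swap_of_lt (hpq : (p : ℕ) + 1 = q) (hy : y * y = 1)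
    (hya : y p < y q) (hc : AtomCond w y) {a b t : Fin n}
    (hab : IsCyc y (swap p q a) (swap p q b)) (hat : a < t) (htb : t < b) :
    ¬(w (swap p q b) < w (swap p q t) ∧ w (swap p q t) < w (swap p q a)) := by
  rcases swap_lt_swap_or hpq hat with hat' | ⟨ha, ht⟩
  · rcases swap_lt_swap_or hpq htb with htb' | ⟨ht, hb⟩
    · exact hc.not_between hab hat' htb'
    subst t b
    simp only [swap_apply_left, swap_apply_right] at hab ⊢
    have hya' := hab.apply_right hy
    have := hc.lt_of_min_lt_of_max_lt hy (u := swap p q a) (z := q)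
      (by simp only [hab.2, lt_min_iff, min_lt_iff]; omega)
      (by simp only [hab.2, max_lt_iff, lt_max_iff]; omega)
    exact fun h => this.asymm h.2
  subst a t
  simp only [swap_apply_left, swap_apply_right] at hab ⊢
  have hyb := hab.apply_right hy
  have hyq := hab.2
  have := hc.lt_of_min_lt_of_max_lt hy (u := p) (z := swap p q b)
    (by simp only [hyb, lt_min_iff, min_lt_iff]; omega)
    (by simp only [hyb, max_lt_iff, lt_max_iff]; omega)
  exact fun h => this.asymm h.1

theorem AtomCond.conj_swap_of_lt (hpq : (p : ℕ) + 1 = q) (hy : y * y = 1) (hya : y p < y q)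
    (hnf : ¬(y p = p ∧ y q = q)) (hc : AtomCond w y) :
    AtomCond (w * swap p q) (swap p q * y * swap p q) := by
  have hyp : y p ≠ q := fun h => by rw [← h, invol_apply hy] at hya; omega
  have hcyc {a b : Fin n} := (isCyc_conj_swap_iff (a := a) (b := b) hpq hy hyp).1
  refine ⟨fun a b h => hc.le_of_isCyc (hcyc h),
    fun a b h t hat htb => hc.not_between_conj_swap_of_lt hpq hy hya (hcyc h) hat htb,
    fun a b a' b' h h' haa' hbb' => ?_⟩
  have hab := hcyc h
  have hab' := hcyc h'
  rcases swap_lt_swap_or hpq haa' with haa'' | ⟨ha, ha'⟩ <;>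
    rcases swap_lt_swap_or hpq hbb' with hbb'' | ⟨hb, hb'⟩
  · exact hc.lt_of_isCyc_lt hab hab' haa'' hbb''
  all_goals exfalso
  · subst b b'
    simp only [swap_apply_left, swap_apply_right] at hab hab'
    rw [← hab.apply_right hy, ← hab'.apply_right hy] at haa''
    exact hya.asymm haa''
  · subst a a'
    simp only [swap_apply_left, swap_apply_right] at hab hab'
    rw [← hab.2, ← hab'.2] at hbb''
    exact hya.asymm hbb''
  · subst a a' b b'
    simp only [swap_apply_left, swap_apply_right] at hab hab'
    exact hnf ⟨hab'.2, hab.2⟩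

theorem AtomCond.mul_swap_iStep (hpq : (p : ℕ) + 1 = q) (hy : y * y = 1) (hya : y p < y q)
    (hw : w p < w q) (hc : AtomCond w y) : AtomCond (w * swap p q) (iStep y p) := by
  by_cases hfix : y p = p ∧ y q = q
  · rw [iStep_of_fixed hpq hfix.1 hfix.2]
    exact hc.mul_swap_of_fixed hpq hfix.1 hfix.2 hw
  · rw [iStep_of_lt hpq hya hfix]
    exact hc.conj_swap_of_lt hpq hy hya hfix

theorem AtomCond.exists_iStep_eq (hpq : (p : ℕ) + 1 = q) (hy : y * y = 1) (hw : w q < w p)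
    (hc : AtomCond w y) : ∃ y' : Perm (Fin n), y' * y' = 1 ∧ y' p < y' q ∧ iStep y' p = y ∧
      AtomCond (w * swap p q) y' := by
  have hyy := invol_apply hy
  by_cases hyp : y p = q
  · have hyq : y q = p := by rw [← hyp, hyy]
    have hcomm : y * swap p q = swap p q * y := by rw [mul_swap_eq_swap_mul, hyp, hyq, swap_comm]
    have hp : (y * swap p q) p = p := by simp [hyq]
    have hq : (y * swap p q) q = q := by simp [hyp]
    refine ⟨y * swap p q, ?_, by rw [hp, hq]; omega, ?_, hc.mul_swap_of_apply_eq hpq hy hyp hw⟩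
    · rw [mul_assoc, ← mul_assoc (swap p q), ← hcomm, mul_assoc, swap_mul_self, mul_one, hy]
    · rw [iStep_of_fixed hpq hp hq, mul_assoc, swap_mul_self, mul_one]
  · have hyd : y q < y p := by
      rcases lt_or_gt_of_ne (y.injective.ne (show p ≠ q by omega)) with h | h
      · exact absurd (hc.lt_of_lt_of_apply_lt hy (by omega) h) hw.asymm
      · exact h
    have hya : (swap p q * y * swap p q) p < (swap p q * y * swap p q) q := by
      simpa using swap_lt_swap hpq hyd (fun h => hyp h.2)
    have hnf : ¬((swap p q * y * swap p q) p = p ∧ (swap p q * y * swap p q) q = q) := by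
      simp only [Perm.mul_apply, swap_apply_left, swap_apply_right, swap_apply_eq_iff]
      rintro ⟨h₁, h₂⟩
      rw [h₁, h₂] at hyd
      omega
    refine ⟨swap p q * y * swap p q, conj_swap_mul_self hy, hya, ?_,
      hc.conj_swap_of_gt hpq hy hyp hyd hw⟩
    rw [iStep_of_lt hpq hya hnf]
    simp only [mul_assoc, swap_mul_self, mul_one]
    rw [← mul_assoc, swap_mul_self, one_mul]

end Transfer

section Characterization

variable {w y : Perm (Fin n)}

theorem lenP_eq_zero_iff : lenP w = 0 ↔ w = 1 := by
  refine ⟨fun h => ?_, fun h => h ▸ lenP_one⟩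
  by_contra hw
  obtain ⟨p, q, hpq, hd⟩ := exists_descent hw
  have := lenP_mul_swap_of_gt hpq w hd
  omega

theorem one_mem_heckeP_one : (1 : Perm (Fin n)) ∈ HeckeP n 1 1 :=
  ⟨[], rfl, by simp [ReducedWordP, wordProdP, lenP_one], rfl⟩

theorem AtomCond.mem_heckeP (hc : AtomCond w y) (hy : y * y = 1) :
    w ∈ HeckeP n 1 y ∧ 2 * lenP w = twiceInvLength y := by
  induction hlen : lenP w generalizing w y with
  | zero =>
    obtain rfl := lenP_eq_zero_iff.1 hlen
    obtain rfl := (atomCond_one_iff hy).1 hc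
    exact ⟨one_mem_heckeP_one, twiceInvLength_one.symm⟩
  | succ k ih =>
    obtain ⟨p, q, hpq, hw⟩ := exists_descent (w := w) fun h => by simp [h, lenP_one] at hlen
    have hlen' := lenP_mul_swap_of_gt hpq w hw
    obtain ⟨y', hy', hya, rfl, hc'⟩ := hc.exists_iStep_eq hpq hy hw
    obtain ⟨hmem, hlen''⟩ := ih hc' hy' (by omega)
    have hmem' := mem_heckeP_mul_swap hpq hmem
      (by rw [mul_assoc, swap_mul_self, mul_one]; omega)
    rw [mul_assoc, swap_mul_self, mul_one] at hmem'
    exact ⟨hmem', by rw [twiceInvLength_iStep_of_lt hpq hy' hya]; omega⟩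

theorem atomCond_of_reducedWordP {l : List ℕ} (hred : ReducedWordP n l)
    (hm : twiceInvLength (iWord (1 : Perm (Fin n)) l) = 2 * l.length) :
    AtomCond (wordProdP n l) (iWord 1 l) := by
  induction l using List.reverseRecOn with
  | nil => exact (atomCond_one_iff (by rfl)).2 rfl
  | append_singleton l i ih =>
    have hle := lenP_mul_sP_le (wordProdP n l) i
    have hlen := lenP_wordProdP_le (n := n) l
    obtain ⟨hy, hmle⟩ := iWord_one_mul_self_and_twiceInvLength_le (n := n) l
    rw [ReducedWordP, wordProdP_append_singleton, List.length_append,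
      List.length_singleton] at hred
    rw [iWord_append_singleton, List.length_append, List.length_singleton] at hm
    rw [wordProdP_append_singleton, iWord_append_singleton]
    by_cases hi : i + 1 < n
    · obtain ⟨p, q, hpq, rfl⟩ := exists_adjacent hi
      rw [sP_eq_swap hpq] at hred hle ⊢
      have hpq' : p ≠ q := by omega
      have hw : wordProdP n l p < wordProdP n l q := by
        refine (lt_or_gt_of_ne ((wordProdP n l).injective.ne hpq')).resolve_right fun h => ?_
        have := lenP_mul_swap_of_gt hpq _ h
        omega
      have hya : iWord 1 l p < iWord 1 l q := by
        refine (lt_or_gt_of_ne ((iWord 1 l).injective.ne hpq')).resolve_right fun h => ?_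
        rw [iStep_of_gt hpq h] at hm
        omega
      rw [twiceInvLength_iStep_of_lt hpq hy hya] at hm
      exact (ih (by rw [ReducedWordP]; omega) (by omega)).mul_swap_iStep hpq hy hya hw
    · rw [sP_eq_one hi, mul_one] at hred
      omega

theorem atomCond_of_mem_heckeP (hw : w ∈ HeckeP n 1 y) (hlen : 2 * lenP w ≤ twiceInvLength y) :
    AtomCond w y := by
  obtain ⟨l, rfl, hred, rfl⟩ := hw
  have := (iWord_one_mul_self_and_twiceInvLength_le (n := n) l).2
  exact atomCond_of_reducedWordP hred (by rw [hred] at hlen; omega)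

theorem exists_atomCond (hy : y * y = 1) : ∃ w : Perm (Fin n), AtomCond w y := by
  have hyy := invol_apply hy
  -- The 2-cycle `(a, b)` gets the consecutive keys `2a` at `b` and `2a + 1` at `a`, a fixed
  -- point `a` the key `2a`; `w` lists the positions in increasing order of their keys.
  let key : Fin n → ℕ := fun t => 2 * min (t : ℕ) (y t) + if t < y t then 1 else 0
  have hkey : ∀ ⦃a b⦄, IsCyc y a b → key b = 2 * a ∧ 2 * a ≤ key a ∧ key a ≤ 2 * a + 1 := by
    rintro a _ ⟨hab, rfl⟩
    simp only [key, hyy]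
    split_ifs <;> omega
  have hinj : Function.Injective key := by
    intro t u h
    simp only [key] at h
    split_ifs at h
    · exact Fin.ext (by omega)
    · omega
    · omega
    · exact y.injective (Fin.ext (by omega))
  set σ := Tuple.sort key
  have hmono : StrictMono (key ∘ σ) :=
    (Tuple.monotone_sort key).strictMono_of_injective (hinj.comp σ.injective)
  have hlt : ∀ t u, σ⁻¹ t < σ⁻¹ u ↔ key t < key u := fun t u => by
    simpa using (hmono.lt_iff_lt (a := σ⁻¹ t) (b := σ⁻¹ u)).symm
  refine ⟨σ⁻¹, fun a b h => ?_, fun a b h t _ _ ht => ?_, fun a b a' b' h h' haa' _ => ?_⟩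
  · exact not_lt.1 fun h' => by have := (hlt a b).1 h'; have := hkey h; omega
  · have := (hlt b t).1 ht.1
    have := (hlt t a).1 ht.2
    have := hkey h
    omega
  · have := hkey h
    have := hkey h'
    exact (hlt a b').2 (by omega)

end Characterization

end HeckeAtom

/-- Can–Joyce–Wyser.  For an involution `y ∈ I(S_n)` and `w ∈ S_n`,
`w ∈ A(y) = A(1, y)` iff: (a) `w(b) ≤ w(a)` for `(a,b) ∈ Cyc(y)`; (b) no `t` with
`a < t < b` has `w(b) < w(t) < w(a)`; and (c) if `(a,b), (a',b') ∈ Cyc(y)` with `a < a'` and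
`b < b'`, then `w(b) ≤ w(a) < w(b') ≤ w(a')`. -/
theorem mem_atoms_one_iff {n : ℕ} (y : Equiv.Perm (Fin n)) (hy : y * y = 1)
    (w : Equiv.Perm (Fin n)) :
    w ∈ AtomsP n 1 y ↔
      ((∀ a b : Fin n, a ≤ b → y a = b → w b ≤ w a) ∧
       (∀ a b : Fin n, a ≤ b → y a = b →
          ∀ t : Fin n, a < t → t < b → ¬ (w b < w t ∧ w t < w a)) ∧
       (∀ a b a' b' : Fin n, a ≤ b → y a = b → a' ≤ b' → y a' = b' → a < a' → b < b' →
          w b ≤ w a ∧ w a < w b' ∧ w b' ≤ w a')) := by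
  rw [← HeckeAtom.atomCond_iff]
  constructor
  · rintro ⟨hw, hmin⟩
    obtain ⟨w₀, hc₀⟩ := HeckeAtom.exists_atomCond hy
    obtain ⟨hw₀, hlen₀⟩ := hc₀.mem_heckeP hy
    have := hmin w₀ hw₀
    exact HeckeAtom.atomCond_of_mem_heckeP hw (by omega)
  · intro hc
    obtain ⟨hw, hlen⟩ := hc.mem_heckeP hy
    exact ⟨hw, fun v hv => by have := HeckeAtom.twiceInvLength_le_of_mem_heckeP hv; omega⟩
end
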